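/- Let A ∈ F^(m×n×p), B ∈ F^(m×n'×p'), C ∈ F^(m'×n×p') all be nondegenerate tensors, and let E ∈ F^(m×n×p') be arbitrary. Let M be the (m+m')×(n+n')×(p+p') tensor with characteristic matrix M(u) = [[A(s)+E(t), B(t)],[C(t), 0]] where s and t are disjoint sets of indeterminates of sizes p and p'. Then R[M] ≥ R[A] + (column rank of B(t)) + (row rank of C(t)). -/

import Mathlib

/-!
Substitution method. If `q` slices of a tensor are linearly independent, one of them is nonzero,
so some rank-one term of an optimal decomposition involves it; adding a suitable multiple of that
slice to all the other slices cancels this term. Repeating, eliminating `q` independent slices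
lowers the rank by at least `q`. Full row rank of `C(t)` makes the last `m'` horizontal slices
of `M` independent, and full column rank of `B(t)` does the same for the last `n'` vertical
slices of what remains. After both eliminations the `s`-part of the remaining tensor is exactly
`A`, since the added slices vanish in the `s`-directions.
-/

open scoped BigOperators

noncomputable def tRank (F : Type) [Field F] {I J K : Type} [Fintype I] [Fintype J] [Fintype K]
    (A : I → J → K → F) : ℕ :=
  sInf {m | ∃ x : Fin m → I → F, ∃ y : Fin m → J → F, ∃ z : Fin m → K → F,
    ∀ i j k, A i j k = ∑ t, x t i * y t j * z t k}

noncomputable def charMatrix {F : Type} [Field F] {I J K : Type} [Fintype K]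
    (A : I → J → K → F) : Matrix I J (MvPolynomial K F) :=
  Matrix.of fun i j => ∑ k, MvPolynomial.X k * MvPolynomial.C (A i j k)

noncomputable def colRank (F : Type) [Field F] {I J K : Type} [Fintype I] [Fintype J] [Fintype K]
    (A : I → J → K → F) : ℕ :=
  ((charMatrix A).map
    (algebraMap (MvPolynomial K F) (FractionRing (MvPolynomial K F)))).rank

noncomputable def rowRank (F : Type) [Field F] {I J K : Type} [Fintype I] [Fintype J] [Fintype K]
    (A : I → J → K → F) : ℕ :=
  (((charMatrix A).transpose).map
    (algebraMap (MvPolynomial K F) (FractionRing (MvPolynomial K F)))).rank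

/-- A tensor is nondegenerate if no nontrivial linear combination of its slices vanishes
and its characteristic matrix has full row and column rank. -/
def Nondeg (F : Type) [Field F] {I J K : Type} [Fintype I] [Fintype J] [Fintype K]
    (A : I → J → K → F) : Prop :=
  (∀ c : K → F, (∀ i j, ∑ k, c k * A i j k = 0) → c = 0) ∧
  rowRank F A = Fintype.card I ∧ colRank F A = Fintype.card J

lemma LinearIndependent.castSucc_add_smul_last {R V : Type*} [Ring R] [AddCommGroup V]
    [Module R V] {q : ℕ} {v : Fin (q + 1) → V} (hv : LinearIndependent R v) (μ : Fin q → R) :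
    LinearIndependent R fun a => v a.castSucc + μ a • v (Fin.last q) := by
  have := (linearIndependent_add_smul_iff (c := Fin.snoc μ 0) (i := Fin.last q) (by simp)).2 hv
  simpa [Function.comp_def] using this.comp _ (Fin.castSucc_injective q)

lemma LinearIndependent.of_comp_slices {F ι J K J' K' : Type} [Field F] {T : ι → J → K → F}
    (g : J' → J) (h : K' → K) (hT : LinearIndependent F fun a j k => T a (g j) (h k)) :
    LinearIndependent F T :=
  hT.of_comp (M := J → K → F)
    { toFun := fun S j k => S (g j) (h k), map_add' := fun _ _ => rfl, map_smul' := fun _ _ => rfl }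

section TensorRank

variable {F : Type} [Field F] {I J K : Type} [Fintype I] [Fintype J] [Fintype K]

lemma tRank_le_card {ι : Type} [Fintype ι] (A : I → J → K → F) (x : ι → I → F) (y : ι → J → F)
    (z : ι → K → F) (h : ∀ i j k, A i j k = ∑ t, x t i * y t j * z t k) :
    tRank F A ≤ Fintype.card ι := by
  let e := Fintype.equivFin ι
  refine Nat.sInf_le ⟨fun t => x (e.symm t), fun t => y (e.symm t), fun t => z (e.symm t), ?_⟩
  intro i j k
  rw [h, ← e.symm.sum_comp]

lemma exists_eq_sum_tRank (A : I → J → K → F) :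
    ∃ x : Fin (tRank F A) → I → F, ∃ y : Fin (tRank F A) → J → F,
      ∃ z : Fin (tRank F A) → K → F, ∀ i j k, A i j k = ∑ t, x t i * y t j * z t k := by
  classical
  -- `A` is the sum of the `|I| |J|` rank-one tensors `e i ⊗ e j ⊗ A i j`
  apply Nat.sInf_mem (s := {m | ∃ x : Fin m → I → F, ∃ y : Fin m → J → F, ∃ z : Fin m → K → F,
    ∀ i j k, A i j k = ∑ t, x t i * y t j * z t k})
  let e := (Fintype.equivFin (I × J)).symm
  refine ⟨_, fun t i => if i = (e t).1 then 1 else 0, fun t j => if j = (e t).2 then 1 else 0,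
    fun t k => A (e t).1 (e t).2 k, fun i j k => ?_⟩
  rw [e.sum_comp (fun q : I × J => (if i = q.1 then (1 : F) else 0) *
    (if j = q.2 then 1 else 0) * A q.1 q.2 k)]
  simp [Fintype.sum_prod_type, ite_mul]

lemma tRank_comp_le {I' J' K' : Type} [Fintype I'] [Fintype J'] [Fintype K']
    (A : I → J → K → F) (f : I' → I) (g : J' → J) (h : K' → K) :
    tRank F (fun i j k => A (f i) (g j) (h k)) ≤ tRank F A := by
  obtain ⟨x, y, z, hA⟩ := exists_eq_sum_tRank A
  simpa using tRank_le_card _ (fun t i => x t (f i)) (fun t j => y t (g j)) (fun t k => z t (h k))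
    fun i j k => hA (f i) (g j) (h k)

lemma tRank_swap_le (A : I → J → K → F) : tRank F (fun j i k => A i j k) ≤ tRank F A := by
  obtain ⟨x, y, z, hA⟩ := exists_eq_sum_tRank A
  simpa using tRank_le_card _ y x z fun j i k => by
    rw [hA]; exact Finset.sum_congr rfl fun t _ => by ring

end TensorRank

section Substitution

variable {F : Type} [Field F] {I J K α : Type} [Fintype I] [Fintype J] [Fintype K] [Fintype α]

lemma exists_tRank_add_one_le (T : α → J → K → F) (e : I → α) {a₀ : α} (h : T a₀ ≠ 0) :
    ∃ lam : I → F, tRank F (fun i => T (e i) + lam i • T a₀) + 1 ≤ tRank F T := by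
  classical
  obtain ⟨x, y, z, hT⟩ := exists_eq_sum_tRank T
  obtain ⟨t₀, ht₀⟩ : ∃ t₀, x t₀ a₀ ≠ 0 := by
    by_contra! hx
    exact h (funext₂ fun j k => by simp [hT, hx])
  -- choosing `lam` to kill the `t₀`-th coefficient of every row removes one rank-one term
  refine ⟨fun i => -x t₀ (e i) / x t₀ a₀, ?_⟩
  have hdecomp : ∀ i j k, (T (e i) + (-x t₀ (e i) / x t₀ a₀) • T a₀) j k =
      ∑ t : {t // t ≠ t₀}, (x t (e i) + (-x t₀ (e i) / x t₀ a₀) * x t a₀) * y t j * z t k := by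
    intro i j k
    have hsum : (T (e i) + (-x t₀ (e i) / x t₀ a₀) • T a₀) j k =
        ∑ t, (x t (e i) + (-x t₀ (e i) / x t₀ a₀) * x t a₀) * y t j * z t k := by
      simp only [Pi.add_apply, Pi.smul_apply, smul_eq_mul, hT, Finset.mul_sum,
        ← Finset.sum_add_distrib]
      exact Finset.sum_congr rfl fun t _ => by ring
    rw [hsum, Fintype.sum_eq_add_sum_subtype_ne _ t₀]
    field_simp
    ring
  have hcard : Fintype.card {t // t ≠ t₀} + 1 = tRank F T := by
    rw [Fintype.card_subtype_compl, Fintype.card_subtype_eq, Fintype.card_fin]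
    have := t₀.pos
    omega
  exact hcard ▸ Nat.add_le_add_right (tRank_le_card _ _ _ _ hdecomp) 1

lemma exists_tRank_add_le_of_linearIndependent (T : α → J → K → F) (e : I → α) {q : ℕ}
    (s : Fin q → α) (hs : LinearIndependent F (T ∘ s)) :
    ∃ c : I → Fin q → F, tRank F (fun i => T (e i) + ∑ a, c i a • T (s a)) + q ≤ tRank F T := by
  induction q generalizing T with
  | zero => exact ⟨0, by simpa using tRank_comp_le T e id id⟩
  | succ q ih =>
    obtain ⟨lam, hlam⟩ := exists_tRank_add_one_le T id (hs.ne_zero (Fin.last q))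
    obtain ⟨c, hc⟩ := ih (fun b => T b + lam b • T (s (Fin.last q))) (s ∘ Fin.castSucc)
      (hs.castSucc_add_smul_last (lam ∘ s ∘ Fin.castSucc))
    refine ⟨fun i => Fin.snoc (c i) (lam (e i) + ∑ a, c i a * lam (s a.castSucc)), ?_⟩
    have hrows : (fun i => T (e i) + ∑ b, (Fin.snoc (c i) (lam (e i) +
          ∑ a, c i a * lam (s a.castSucc)) : Fin (q + 1) → F) b • T (s b)) =
        fun i => (T (e i) + lam (e i) • T (s (Fin.last q))) + ∑ a, c i a •
          (T (s a.castSucc) + lam (s a.castSucc) • T (s (Fin.last q))) := by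
      funext i
      simp only [Fin.sum_univ_castSucc, Fin.snoc_castSucc, Fin.snoc_last, smul_add,
        Finset.sum_add_distrib, add_smul, Finset.sum_smul, smul_smul]
      abel
    rw [hrows, ← add_assoc]
    exact (Nat.add_le_add_right hc 1).trans hlam

end Substitution

section Nondegenerate

variable {F : Type} [Field F] {I J K : Type} [Fintype I] [Fintype J] [Fintype K]

lemma linearIndependent_slices_of_colRank_eq (A : I → J → K → F)
    (h : colRank F A = Fintype.card J) : LinearIndependent F fun j i k => A i j k := by
  classical
  set φ := algebraMap (MvPolynomial K F) (FractionRing (MvPolynomial K F))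
  have hcols : LinearIndependent (FractionRing (MvPolynomial K F)) ((charMatrix A).map φ).col := by
    rw [linearIndependent_iff_card_eq_finrank_span, Set.finrank,
      ← Matrix.rank_eq_finrank_span_cols]
    exact h.symm
  rw [Fintype.linearIndependent_iff] at hcols ⊢
  intro d hd j
  have hd' : ∀ i k, ∑ j, d j * A i j k = 0 := fun i k => by
    simpa using congrFun (congrFun hd i) k
  have hcomb : ∑ j, φ (MvPolynomial.C (d j)) • ((charMatrix A).map φ).col j = 0 := by
    funext i
    have : ∑ j, MvPolynomial.C (d j) * charMatrix A i j = 0 := by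
      simp only [charMatrix, Matrix.of_apply, Finset.mul_sum]
      rw [Finset.sum_comm]
      refine Finset.sum_eq_zero fun k _ => ?_
      simp only [mul_left_comm (MvPolynomial.C _), ← map_mul, ← Finset.mul_sum, ← map_sum, hd',
        map_zero, mul_zero]
    simpa [Matrix.col, ← map_mul, ← map_sum] using congrArg φ this
  simpa [map_eq_zero_iff φ (IsFractionRing.injective _ _)] using hcols _ hcomb j

lemma linearIndependent_of_rowRank_eq (A : I → J → K → F)
    (h : rowRank F A = Fintype.card I) : LinearIndependent F A :=
  linearIndependent_slices_of_colRank_eq (fun j i k => A i j k) h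

end Nondegenerate

lemma tRank_add_le_of_blocks {F : Type} [Field F] {m m' n n' p p' : ℕ}
    (M : Fin (m + m') → Fin (n + n') → Fin (p + p') → F) (A : Fin m → Fin n → Fin p → F)
    (B : Fin m → Fin n' → Fin p' → F) (C : Fin m' → Fin n → Fin p' → F)
    (hMA : ∀ i j l, M (Fin.castAdd m' i) (Fin.castAdd n' j) (Fin.castAdd p' l) = A i j l)
    (hMB : ∀ i b e, M (Fin.castAdd m' i) (Fin.natAdd n b) (Fin.natAdd p e) = B i b e)
    (hMC : ∀ a j e, M (Fin.natAdd m a) (Fin.castAdd n' j) (Fin.natAdd p e) = C a j e)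
    (hM₁ : ∀ i b l, M (Fin.castAdd m' i) (Fin.natAdd n b) (Fin.castAdd p' l) = 0)
    (hM₂ : ∀ a j l, M (Fin.natAdd m a) (Fin.castAdd n' j) (Fin.castAdd p' l) = 0)
    (hM₃ : ∀ a b k, M (Fin.natAdd m a) (Fin.natAdd n b) k = 0)
    (hB : LinearIndependent F fun b i e => B i b e) (hC : LinearIndependent F C) :
    tRank F A + n' + m' ≤ tRank F M := by
  obtain ⟨c₁, h₁⟩ := exists_tRank_add_le_of_linearIndependent M (Fin.castAdd m') (Fin.natAdd m)
    (.of_comp_slices (Fin.castAdd n') (Fin.natAdd p) (by simpa [hMC] using hC))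
  set N₁ := fun i => M (Fin.castAdd m' i) + ∑ a, c₁ i a • M (Fin.natAdd m a)
  obtain ⟨c₂, h₂⟩ := exists_tRank_add_le_of_linearIndependent (fun j i k => N₁ i j k)
    (Fin.castAdd n') (Fin.natAdd n)
    (.of_comp_slices id (Fin.natAdd p) (by simpa [N₁, Finset.sum_apply, hMB, hM₃] using hB))
  set N₂ := fun j => (fun i k => N₁ i (Fin.castAdd n' j) k) +
    ∑ b, c₂ j b • fun i k => N₁ i (Fin.natAdd n b) k
  have hA : A = fun i j l => N₂ j i (Fin.castAdd p' l) := by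
    funext i j l
    simp [N₂, N₁, Finset.sum_apply, hMA, hM₁, hM₂, hM₃]
  have hAN₂ : tRank F A ≤ tRank F N₂ := by
    rw [hA]
    exact (tRank_comp_le (fun i j k => N₂ j i k) id id (Fin.castAdd p')).trans (tRank_swap_le N₂)
  calc tRank F A + n' + m'
      ≤ tRank F N₂ + n' + m' := by grw [hAN₂]
    _ ≤ tRank F N₁ + m' := by grw [h₂, tRank_swap_le]
    _ ≤ tRank F M := h₁

theorem rank_block_main_general (F : Type) [Field F] {m m' n n' p p' : ℕ}
    (A : Fin m → Fin n → Fin p → F) (B : Fin m → Fin n' → Fin p' → F)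
    (C : Fin m' → Fin n → Fin p' → F) (E : Fin m → Fin n → Fin p' → F)
    (hB : Nondeg F B) (hC : Nondeg F C) :
    tRank F A + colRank F B + rowRank F C ≤
      tRank F (fun (i : Fin (m + m')) (j : Fin (n + n')) (k : Fin (p + p')) =>
        Fin.addCases
          (fun i1 =>
            Fin.addCases
              (fun j1 => Fin.addCases (fun l => A i1 j1 l) (fun e => E i1 j1 e) k)
              (fun j2 => Fin.addCases (fun _ => (0 : F)) (fun e => B i1 j2 e) k) j)
          (fun i2 =>
            Fin.addCases
              (fun j1 => Fin.addCases (fun _ => (0 : F)) (fun e => C i2 j1 e) k)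
              (fun _ => (0 : F)) j) i) := by
  have hn' : colRank F B = n' := hB.2.2.trans (Fintype.card_fin n')
  have hm' : rowRank F C = m' := hC.2.1.trans (Fintype.card_fin m')
  rw [hn', hm']
  refine tRank_add_le_of_blocks _ A B C ?_ ?_ ?_ ?_ ?_ ?_
    (linearIndependent_slices_of_colRank_eq B hB.2.2) (linearIndependent_of_rowRank_eq C hC.2.1) <;>
  simp

/-- The main theorem: if `M` has characteristic matrix `[[A(s)+E(t), B(t)], [C(t), 0]]`
with `A`, `B`, `C` nondegenerate, then
`R[M] ≥ R[A] + column rank of B(t) + row rank of C(t)`. -/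
theorem rank_block_main (F : Type) [Field F] {m m' n n' p p' : ℕ}
    (A : Fin m → Fin n → Fin p → F) (B : Fin m → Fin n' → Fin p' → F)
    (C : Fin m' → Fin n → Fin p' → F) (E : Fin m → Fin n → Fin p' → F)
    (hA : Nondeg F A) (hB : Nondeg F B) (hC : Nondeg F C) :
    tRank F A + colRank F B + rowRank F C ≤
      tRank F (fun (i : Fin (m + m')) (j : Fin (n + n')) (k : Fin (p + p')) =>
        Fin.addCases
          (fun i1 =>
            Fin.addCases
              (fun j1 => Fin.addCases (fun l => A i1 j1 l) (fun e => E i1 j1 e) k)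
              (fun j2 => Fin.addCases (fun _ => (0 : F)) (fun e => B i1 j2 e) k) j)
          (fun i2 =>
            Fin.addCases
              (fun j1 => Fin.addCases (fun _ => (0 : F)) (fun e => C i2 j1 e) k)
              (fun _ => (0 : F)) j) i) :=
  rank_block_main_general F A B C E hB hC
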